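/- arXiv:2412.00024 — 3 statements merged into one kernel-verified Lean document; each statement's English description precedes it below -/
import Mathlib

section
/- For every nonnegative integer k, the integral from 0 to 1 of x^k (1-x)^{2k} ln(x) dx equals (H_k - H_{3k+1}) / ((3k+1) * binomial(3k, k)). -/
/-!
Write `I(a, b) = ∫₀¹ xᵃ (1 - x)ᵇ log x`. Splitting `(1 - x)ᵇ⁺¹ = (1 - x)ᵇ - x (1 - x)ᵇ` gives
`I(a, b + 1) = I(a, b) - I(a + 1, b)`, and `I(a, 0) = -1 / (a + 1)²` by an explicit antiderivative.
The closed form `(H_a - H_{a+b+1}) / ((a + b + 1) C(a + b, a))` satisfies the same recurrence and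
initial values, so induction on `b` identifies the two; the theorem is the case `a = k`, `b = 2k`.
-/

open Real intervalIntegral MeasureTheory Set Nat

/-- `B(a + 1, b + 1) (ψ(a + 1) - ψ(a + b + 2))`, the derivative in `a` of the Beta integral. -/
noncomputable def betaLogClosedForm (a b : ℕ) : ℝ :=
  ((harmonic a : ℝ) - harmonic (a + b + 1)) / ((a + b + 1) * ((a + b).choose a : ℝ))

lemma betaLogClosedForm_zero_right (a : ℕ) :
    betaLogClosedForm a 0 = -1 / ((a : ℝ) + 1) ^ 2 := by
  have : (a : ℝ) + 1 ≠ 0 := by positivity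
  simp only [betaLogClosedForm, add_zero, choose_self, harmonic_succ]
  push_cast
  field_simp
  ring

lemma betaLogClosedForm_succ_right (a b : ℕ) :
    betaLogClosedForm a (b + 1) = betaLogClosedForm a b - betaLogClosedForm (a + 1) b := by
  simp only [betaLogClosedForm, cast_add_choose]
  rw [show a + (b + 1) = a + b + 1 by ring, show a + 1 + b = a + b + 1 by ring]
  simp only [harmonic_succ, factorial_succ]
  push_cast
  field_simp
  ring

lemma continuous_pow_succ_mul_log (m : ℕ) : Continuous fun x : ℝ => x ^ (m + 1) * log x := by
  simp only [pow_succ, mul_assoc]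
  exact (continuous_pow m).fun_mul continuous_mul_log

lemma intervalIntegrable_pow_mul_one_sub_pow_mul_log (a b : ℕ) (u v : ℝ) :
    IntervalIntegrable (fun x : ℝ => x ^ a * (1 - x) ^ b * log x) volume u v :=
  intervalIntegrable_log'.continuousOn_mul (by fun_prop)

lemma integral_pow_mul_log (m : ℕ) :
    ∫ x in (0:ℝ)..1, x ^ m * log x = -1 / ((m : ℝ) + 1) ^ 2 := by
  have hm : (m : ℝ) + 1 ≠ 0 := by positivity
  let F : ℝ → ℝ := fun x => x ^ (m + 1) * log x / (m + 1) - x ^ (m + 1) / (m + 1) ^ 2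
  have hF : ContinuousOn F (Icc 0 1) := by
    have := continuous_pow_succ_mul_log m
    fun_prop
  have hF' : ∀ x ∈ Ioo (0:ℝ) 1, HasDerivAt F (x ^ m * log x) x := by
    intro x hx
    have hx0 := hx.1.ne'
    refine ((((hasDerivAt_pow (m + 1) x).mul (hasDerivAt_log hx0)).div_const ((m:ℝ) + 1)).sub
      ((hasDerivAt_pow (m + 1) x).div_const (((m:ℝ) + 1) ^ 2))).congr_deriv ?_
    push_cast
    field_simp
    ring
  rw [integral_eq_sub_of_hasDerivAt_of_le zero_le_one hF hF'
    (by simpa using intervalIntegrable_pow_mul_one_sub_pow_mul_log m 0 0 1)]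
  simp [F]
  field_simp

theorem integral_pow_mul_one_sub_pow_mul_log (a b : ℕ) :
    ∫ x in (0:ℝ)..1, x ^ a * (1 - x) ^ b * log x = betaLogClosedForm a b := by
  induction b generalizing a with
  | zero => simpa [betaLogClosedForm_zero_right] using integral_pow_mul_log a
  | succ b ih =>
    have hsplit : ∀ x : ℝ, x ^ a * (1 - x) ^ (b + 1) * log x =
        x ^ a * (1 - x) ^ b * log x - x ^ (a + 1) * (1 - x) ^ b * log x := fun x => by ring
    simp only [hsplit]
    rw [integral_sub (intervalIntegrable_pow_mul_one_sub_pow_mul_log a b 0 1)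
      (intervalIntegrable_pow_mul_one_sub_pow_mul_log (a + 1) b 0 1), ih, ih,
      betaLogClosedForm_succ_right]

theorem stmt_0 (k : ℕ) :
    ∫ x in (0:ℝ)..1, x ^ k * (1 - x) ^ (2 * k) * Real.log x =
      ((harmonic k : ℝ) - (harmonic (3 * k + 1) : ℝ)) /
        ((3 * k + 1) * (Nat.choose (3 * k) k : ℝ)) := by
  rw [integral_pow_mul_one_sub_pow_mul_log, betaLogClosedForm, show k + 2 * k = 3 * k by ring]
  push_cast
  ring_nf
end

section
/- For every real λ with λ not in the interval [0,1], the integral from 0 to 1 of ln(x/(1-x))/(x - λ) dx equals -(1/2) * (ln((λ-1)/λ))^2. -/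
/-!
The Möbius map `ψ x = λ (1 - x) / (λ - x)` is a decreasing involution of `(0, 1)` onto itself
that sends the odds `x / (1 - x)` to `λ / (λ - 1)` times their reciprocal, so with
`L = log ((λ - 1) / λ)` it turns `log (x / (1 - x))` into `-L - log (x / (1 - x))`, while
`|ψ'(x)| / (ψ x - λ) = 1 / (x - λ)`. Substituting `ψ` in the integral `I` therefore gives
`I = -L ∫₀¹ dx / (x - λ) - I = -L² - I`.
-/

open MeasureTheory Set Real

lemma mul_sub_one_pos_of_notMem_Icc {lam : ℝ} (hlam : lam ∉ Icc (0 : ℝ) 1) :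
    0 < lam * (lam - 1) := by
  rw [mem_Icc, not_and_or, not_le, not_le] at hlam
  rcases hlam with h | h <;> nlinarith

lemma sub_ne_zero_of_mul_sub_one_pos {lam x : ℝ} (hlam : 0 < lam * (lam - 1))
    (hx : x ∈ Icc (0 : ℝ) 1) : lam - x ≠ 0 := by
  intro h
  obtain rfl : lam = x := by linarith
  nlinarith [hx.1, hx.2]

lemma log_div_one_sub (x : ℝ) : log (x / (1 - x)) = log x - log (1 - x) := by
  rcases eq_or_ne x 0 with rfl | hx0
  · simp
  rcases eq_or_ne x 1 with rfl | hx1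
  · simp
  exact log_div hx0 (sub_ne_zero.2 hx1.symm)

lemma continuousOn_inv_sub {lam : ℝ} (hlam : 0 < lam * (lam - 1)) :
    ContinuousOn (fun x : ℝ => (x - lam)⁻¹) (Icc 0 1) :=
  ContinuousOn.inv₀ (by fun_prop) fun x hx h =>
    sub_ne_zero_of_mul_sub_one_pos hlam hx (by linarith)

lemma intervalIntegrable_log_div_one_sub_div_sub {lam : ℝ} (hlam : 0 < lam * (lam - 1)) :
    IntervalIntegrable (fun x => log (x / (1 - x)) / (x - lam)) volume 0 1 := by
  have hlog : IntervalIntegrable (fun x => log (1 - x)) volume 0 1 := by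
    simpa using (intervalIntegral.intervalIntegrable_log' (a := 0) (b := 1)).comp_sub_left 1 |>.symm
  have hinv := continuousOn_inv_sub hlam
  rw [← uIcc_of_le zero_le_one] at hinv
  convert (intervalIntegral.intervalIntegrable_log'.sub hlog).mul_continuousOn hinv using 2 with x
  rw [log_div_one_sub, div_eq_mul_inv]

lemma integral_inv_sub {lam : ℝ} (hlam : 0 < lam * (lam - 1)) :
    ∫ x in (0 : ℝ)..1, (x - lam)⁻¹ = log ((lam - 1) / lam) := by
  have hne : (0 : ℝ) ∉ uIcc (0 - lam) (1 - lam) := by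
    rw [mem_uIcc]
    rintro (⟨h₀, h₁⟩ | ⟨h₀, h₁⟩) <;> nlinarith
  rw [intervalIntegral.integral_comp_sub_right (fun x => x⁻¹), integral_inv hne, zero_sub,
    div_neg, ← neg_div, neg_sub]

noncomputable def oddsInvolution (lam x : ℝ) : ℝ := lam * (1 - x) / (lam - x)

section oddsInvolution

variable {lam x : ℝ}

lemma one_sub_oddsInvolution (hx : lam - x ≠ 0) :
    1 - oddsInvolution lam x = (lam - 1) * x / (lam - x) := by
  rw [oddsInvolution]; field_simp; ring

lemma sub_oddsInvolution (hx : lam - x ≠ 0) :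
    lam - oddsInvolution lam x = lam * (lam - 1) / (lam - x) := by
  rw [oddsInvolution]; field_simp; ring

lemma oddsInvolution_oddsInvolution (hlam : lam * (lam - 1) ≠ 0) (hx : lam - x ≠ 0) :
    oddsInvolution lam (oddsInvolution lam x) = x := by
  rw [oddsInvolution, sub_oddsInvolution hx, one_sub_oddsInvolution hx]
  field_simp
  exact mul_div_cancel_left₀ x hlam

lemma hasDerivAt_oddsInvolution (hx : lam - x ≠ 0) :
    HasDerivAt (oddsInvolution lam) (lam * (1 - lam) / (lam - x) ^ 2) x := by
  have := (((hasDerivAt_id' x).const_sub 1).const_mul lam).div ((hasDerivAt_id' x).const_sub lam) hx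
  exact this.congr_deriv (by ring)

lemma mapsTo_oddsInvolution (hlam : 0 < lam * (lam - 1)) :
    MapsTo (oddsInvolution lam) (Ioo 0 1) (Ioo 0 1) := by
  intro x ⟨hx0, hx1⟩
  have hx : lam - x ≠ 0 := sub_ne_zero_of_mul_sub_one_pos hlam ⟨hx0.le, hx1.le⟩
  have h₀ : 0 < lam * (lam - x) := by
    nlinarith [mul_nonneg (sub_pos.2 hx1).le (sq_nonneg lam), mul_pos hx0 hlam]
  have h₁ : 0 < (lam - 1) * (lam - x) := by
    nlinarith [mul_nonneg hx0.le (sq_nonneg (lam - 1)), mul_pos (sub_pos.2 hx1) hlam]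
  have hpos : 0 < oddsInvolution lam x := by
    rw [oddsInvolution, ← mul_div_mul_right _ _ hx, ← sq]
    exact div_pos (by nlinarith [mul_pos h₀ (sub_pos.2 hx1)]) (by positivity)
  have hpos' : 0 < 1 - oddsInvolution lam x := by
    rw [one_sub_oddsInvolution hx, ← mul_div_mul_right _ _ hx, ← sq]
    exact div_pos (by nlinarith [mul_pos h₁ hx0]) (by positivity)
  exact ⟨hpos, by linarith⟩

lemma bijOn_oddsInvolution (hlam : 0 < lam * (lam - 1)) :
    BijOn (oddsInvolution lam) (Ioo 0 1) (Ioo 0 1) := by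
  have hinv : InvOn (oddsInvolution lam) (oddsInvolution lam) (Ioo 0 1) (Ioo 0 1) := by
    have h : LeftInvOn (oddsInvolution lam) (oddsInvolution lam) (Ioo 0 1) := fun x hx =>
      oddsInvolution_oddsInvolution hlam.ne'
        (sub_ne_zero_of_mul_sub_one_pos hlam (Ioo_subset_Icc_self hx))
    exact ⟨h, h⟩
  exact hinv.bijOn (mapsTo_oddsInvolution hlam) (mapsTo_oddsInvolution hlam)

lemma oddsInvolution_div_one_sub (hlam : 0 < lam * (lam - 1)) (hx : x ∈ Ioo 0 1) :
    oddsInvolution lam x / (1 - oddsInvolution lam x) = ((lam - 1) / lam * (x / (1 - x)))⁻¹ := by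
  have hx' := sub_ne_zero_of_mul_sub_one_pos hlam (Ioo_subset_Icc_self hx)
  have hlam0 : lam ≠ 0 := left_ne_zero_of_mul hlam.ne'
  have hlam1 : lam - 1 ≠ 0 := right_ne_zero_of_mul hlam.ne'
  have hx0 : x ≠ 0 := hx.1.ne'
  have hx1 : 1 - x ≠ 0 := by linarith [hx.2]
  rw [one_sub_oddsInvolution hx', oddsInvolution]
  field_simp

lemma abs_deriv_smul_log_odds_div_sub_oddsInvolution (hlam : 0 < lam * (lam - 1))
    (hx : x ∈ Ioo 0 1) :
    |lam * (1 - lam) / (lam - x) ^ 2| •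
        (log (oddsInvolution lam x / (1 - oddsInvolution lam x)) / (oddsInvolution lam x - lam)) =
      -log ((lam - 1) / lam) * (x - lam)⁻¹ - log (x / (1 - x)) / (x - lam) := by
  have hx' := sub_ne_zero_of_mul_sub_one_pos hlam (Ioo_subset_Icc_self hx)
  have hx1 : 1 - x ≠ 0 := by linarith [hx.2]
  have hodds : x / (1 - x) ≠ 0 := div_ne_zero hx.1.ne' hx1
  have hlam0 : lam ≠ 0 := left_ne_zero_of_mul hlam.ne'
  have hlam1 : lam - 1 ≠ 0 := right_ne_zero_of_mul hlam.ne'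
  have hc : (lam - 1) / lam ≠ 0 := div_ne_zero hlam1 hlam0
  have habs : |lam * (1 - lam) / (lam - x) ^ 2| = lam * (lam - 1) / (lam - x) ^ 2 := by
    rw [abs_div, abs_sq, ← abs_neg, neg_mul_eq_mul_neg, neg_sub, abs_of_pos hlam]
  have hsub : oddsInvolution lam x - lam = -(lam * (lam - 1) / (lam - x)) := by
    rw [← sub_oddsInvolution hx', neg_sub]
  rw [oddsInvolution_div_one_sub hlam hx, log_inv, log_mul hc hodds, habs, hsub, smul_eq_mul]
  have hx'' : x - lam ≠ 0 := fun h => hx' (by linarith)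
  generalize log ((lam - 1) / lam) = a
  generalize log (x / (1 - x)) = b
  field_simp
  ring

end oddsInvolution

theorem stmt_3 (lam : ℝ) (hlam : lam ∉ Set.Icc (0:ℝ) 1) :
    ∫ x in (0:ℝ)..1, Real.log (x / (1 - x)) / (x - lam) =
      -(1 / 2) * (Real.log ((lam - 1) / lam)) ^ 2 := by
  have hlam' := mul_sub_one_pos_of_notMem_Icc hlam
  set L := log ((lam - 1) / lam)
  set f := fun x => log (x / (1 - x)) / (x - lam)
  have hf : IntegrableOn f (Ioo 0 1) :=
    (intervalIntegrable_log_div_one_sub_div_sub hlam').1.mono_set Ioo_subset_Ioc_self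
  have hinv : IntegrableOn (fun x => (x - lam)⁻¹) (Ioo 0 1) :=
    (continuousOn_inv_sub hlam').integrableOn_Icc.mono_set Ioo_subset_Icc_self
  have hψ := bijOn_oddsInvolution hlam'
  have hself : ∫ x in Ioo 0 1, f x = -L * L - ∫ x in Ioo 0 1, f x := calc
    ∫ x in Ioo 0 1, f x = ∫ x in oddsInvolution lam '' Ioo 0 1, f x := by rw [hψ.image_eq]
    _ = ∫ x in Ioo 0 1, |lam * (1 - lam) / (lam - x) ^ 2| • f (oddsInvolution lam x) :=
      integral_image_eq_integral_abs_deriv_smul measurableSet_Ioo (fun x hx =>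
        (hasDerivAt_oddsInvolution (sub_ne_zero_of_mul_sub_one_pos hlam'
          (Ioo_subset_Icc_self hx))).hasDerivWithinAt) hψ.injOn f
    _ = ∫ x in Ioo 0 1, (-L * (x - lam)⁻¹ - f x) := setIntegral_congr_fun measurableSet_Ioo
      fun x hx => abs_deriv_smul_log_odds_div_sub_oddsInvolution hlam' hx
    _ = -L * L - ∫ x in Ioo 0 1, f x := by
      rw [integral_sub (hinv.const_mul _) hf, integral_const_mul, ← integral_Ioc_eq_integral_Ioo,
        ← intervalIntegral.integral_of_le zero_le_one, integral_inv_sub hlam']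
  rw [intervalIntegral.integral_of_le zero_le_one, integral_Ioc_eq_integral_Ioo]
  linarith
end

section
/- The integral from 0 to 1 of ln(x)/(x-2) dx equals π²/12 - (ln 2)²/2. -/
/-!
Expanding `1 / (2 - x)` geometrically and integrating termwise against `-log x` (all terms are
nonnegative on `(0, 1)`) shows that the integral is `Li₂ (1/2) = ∑ 2⁻ⁿ / n²`. Its value comes from
Euler's reflection formula `Li₂ c + Li₂ (1 - c) = π² / 6 - log c * log (1 - c)`: split
`Li₂ 1 = ∫₀¹ -log (1 - x) / x dx` at `c` and substitute `x ↦ 1 - x` in the second piece, which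
becomes `∫₀^{1-c} -log x / (1 - x) dx`, again computed termwise.
-/

open Real MeasureTheory Set Filter

section NonnegSeries

variable {α : Type*} [MeasurableSpace α] {μ : Measure α} {F : ℕ → α → ℝ} {g : α → ℝ}

theorem integrable_of_hasSum_of_nonneg (hF : ∀ n, Integrable (F n) μ) (hF0 : ∀ n, 0 ≤ᵐ[μ] F n)
    (hg : ∀ᵐ x ∂μ, HasSum (F · x) (g x)) (hs : Summable fun n ↦ ∫ x, F n x ∂μ) :
    Integrable g μ := by
  refine ⟨aestronglyMeasurable_of_tendsto_ae atTop
    (fun N ↦ Finset.aestronglyMeasurable_fun_sum _ fun n _ ↦ (hF n).1)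
    (hg.mono fun x hx ↦ hx.tendsto_sum_nat), ?_⟩
  have hlin : ∫⁻ x, ‖g x‖ₑ ∂μ = ∑' n, ENNReal.ofReal (∫ x, F n x ∂μ) :=
    calc ∫⁻ x, ‖g x‖ₑ ∂μ = ∫⁻ x, ∑' n, ENNReal.ofReal (F n x) ∂μ := by
          refine lintegral_congr_ae ?_
          filter_upwards [hg, ae_all_iff.2 hF0] with x hx h0
          rw [← ENNReal.ofReal_tsum_of_nonneg h0 hx.summable, hx.tsum_eq,
            Real.enorm_of_nonneg (hx.nonneg h0)]
      _ = ∑' n, ∫⁻ x, ENNReal.ofReal (F n x) ∂μ :=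
          lintegral_tsum fun n ↦ (hF n).1.aemeasurable.ennreal_ofReal
      _ = ∑' n, ENNReal.ofReal (∫ x, F n x ∂μ) := by
          congr with n
          rw [ofReal_integral_eq_lintegral_ofReal (hF n) (hF0 n)]
  rw [HasFiniteIntegral, hlin,
    ← ENNReal.ofReal_tsum_of_nonneg (fun n ↦ integral_nonneg_of_ae (hF0 n)) hs]
  exact ENNReal.ofReal_lt_top

theorem hasSum_integral_of_nonneg (hF : ∀ n, AEStronglyMeasurable (F n) μ)
    (hF0 : ∀ n, 0 ≤ᵐ[μ] F n) (hg : ∀ᵐ x ∂μ, HasSum (F · x) (g x)) (hgi : Integrable g μ) :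
    HasSum (fun n ↦ ∫ x, F n x ∂μ) (∫ x, g x ∂μ) := by
  refine hasSum_integral_of_dominated_convergence F hF
    (fun n ↦ (hF0 n).mono fun x hx ↦ (Real.norm_of_nonneg hx).le)
    (hg.mono fun x hx ↦ hx.summable) (hgi.congr ?_) hg
  filter_upwards [hg] with x hx using hx.tsum_eq.symm

end NonnegSeries

theorem hasSum_one_div_succ_sq : HasSum (fun n : ℕ ↦ 1 / ((n : ℝ) + 1) ^ 2) (π ^ 2 / 6) := by
  have h := (hasSum_nat_add_iff (f := fun n : ℕ ↦ 1 / (n : ℝ) ^ 2) 1).mpr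
    (by simpa using hasSum_zeta_two)
  simpa using h

-- `Li₂ x`; outside `|x| ≤ 1` the series diverges and `tsum` returns the junk value `0`.
noncomputable def dilog (x : ℝ) : ℝ := ∑' n : ℕ, x ^ (n + 1) / ((n : ℝ) + 1) ^ 2

theorem hasSum_dilog {x : ℝ} (hx : |x| ≤ 1) :
    HasSum (fun n : ℕ ↦ x ^ (n + 1) / ((n : ℝ) + 1) ^ 2) (dilog x) := by
  refine (hasSum_one_div_succ_sq.summable.of_norm_bounded fun n ↦ ?_).hasSum
  rw [norm_div, norm_pow, Real.norm_eq_abs, norm_of_nonneg (by positivity)]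
  gcongr
  exact pow_le_one₀ (abs_nonneg x) hx

theorem dilog_one : dilog 1 = π ^ 2 / 6 :=
  (hasSum_dilog (by norm_num)).unique (by simpa using hasSum_one_div_succ_sq)

theorem intervalIntegrable_neg_log {a b : ℝ} :
    IntervalIntegrable (fun x ↦ -log x) volume a b :=
  intervalIntegral.intervalIntegrable_log'.neg

theorem integral_pow_mul_neg_log (n : ℕ) {c : ℝ} (hc : 0 ≤ c) :
    ∫ x in (0 : ℝ)..c, x ^ n * -log x
      = c ^ (n + 1) / ((n : ℝ) + 1) ^ 2 - c ^ (n + 1) * log c / ((n : ℝ) + 1) := by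
  have hcont : Continuous fun y : ℝ ↦
      y ^ (n + 1) / ((n : ℝ) + 1) ^ 2 - y ^ (n + 1) * log y / ((n : ℝ) + 1) := by
    have : Continuous fun y : ℝ ↦ y ^ (n + 1) * log y :=
      ((continuous_pow n).mul continuous_mul_log).congr fun y ↦ by simp only [Pi.mul_apply]; ring
    exact ((continuous_pow _).div_const _).sub (this.div_const _)
  rw [intervalIntegral.integral_eq_sub_of_hasDerivAt_of_le hc hcont.continuousOn (fun x hx ↦ ?_)
    (intervalIntegrable_neg_log.continuousOn_mul (continuous_pow n).continuousOn)]
  · simp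
  · have h1 : HasDerivAt (fun y : ℝ ↦ y ^ (n + 1)) (((n : ℝ) + 1) * x ^ n) x := by
      simpa using hasDerivAt_pow (n + 1) x
    refine ((h1.div_const _).sub ((h1.mul (hasDerivAt_log hx.1.ne')).div_const _)).congr_deriv ?_
    field_simp [hx.1.ne']
    ring

theorem hasSum_integral_neg_log_div_one_sub_mul {a c : ℝ} (ha : 0 ≤ a) (hc0 : 0 ≤ c)
    (hc1 : c ≤ 1) (hac : a * c < 1) :
    HasSum
      (fun n : ℕ ↦ a ^ n * (c ^ (n + 1) / ((n : ℝ) + 1) ^ 2 - c ^ (n + 1) * log c / ((n : ℝ) + 1)))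
      (∫ x in (0 : ℝ)..c, -log x / (1 - a * x)) := by
  have hax : ∀ x ∈ Icc 0 c, 0 ≤ a * x ∧ a * x < 1 := fun x hx ↦
    ⟨mul_nonneg ha hx.1, (mul_le_mul_of_nonneg_left hx.2 ha).trans_lt hac⟩
  have hint : IntervalIntegrable (fun x ↦ -log x / (1 - a * x)) volume 0 c := by
    have hcont : ContinuousOn (fun x : ℝ ↦ (1 - a * x)⁻¹) (uIcc 0 c) := by
      rw [uIcc_of_le hc0]
      exact (continuousOn_const.sub (continuousOn_const.mul continuousOn_id)).inv₀
        fun x hx ↦ (sub_pos.2 (hax x hx).2).ne'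
    simpa only [div_eq_inv_mul] using intervalIntegrable_neg_log.continuousOn_mul hcont
  have hsum := hasSum_integral_of_nonneg (μ := volume.restrict (Ioc 0 c))
    (F := fun n x ↦ (a * x) ^ n * -log x) (fun n ↦ by fun_prop)
    (fun n ↦ ae_restrict_of_forall_mem measurableSet_Ioc fun x hx ↦
      mul_nonneg (pow_nonneg (hax x (Ioc_subset_Icc_self hx)).1 n)
        (neg_nonneg.2 (log_nonpos hx.1.le (hx.2.trans hc1))))
    (ae_restrict_of_forall_mem measurableSet_Ioc fun x hx ↦ by
      obtain ⟨hax0, hax1⟩ := hax x (Ioc_subset_Icc_self hx)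
      simpa only [div_eq_mul_inv, mul_comm] using
        (hasSum_geometric_of_lt_one hax0 hax1).mul_right (-log x))
    ((intervalIntegrable_iff_integrableOn_Ioc_of_le hc0).1 hint)
  rw [← intervalIntegral.integral_of_le hc0] at hsum
  convert hsum using 2 with n
  simp only [← intervalIntegral.integral_of_le hc0, mul_pow, mul_assoc,
    intervalIntegral.integral_const_mul, integral_pow_mul_neg_log n hc0]

theorem hasSum_pow_div_succ_of_abs_lt_one {x : ℝ} (hx0 : x ≠ 0) (hx1 : |x| < 1) :
    HasSum (fun n : ℕ ↦ x ^ n / ((n : ℝ) + 1)) (-log (1 - x) / x) := by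
  refine ((hasSum_pow_div_log_of_abs_lt_one hx1).div_const x).congr_fun fun n ↦ ?_
  field_simp
  ring

theorem intervalIntegrable_neg_log_one_sub_div_and_integral_eq_dilog {c : ℝ} (hc0 : 0 ≤ c)
    (hc1 : c ≤ 1) :
    IntervalIntegrable (fun x ↦ -log (1 - x) / x) volume 0 c ∧
      ∫ x in (0 : ℝ)..c, -log (1 - x) / x = dilog c := by
  have hF : ∀ n : ℕ, IntegrableOn (fun x : ℝ ↦ x ^ n / ((n : ℝ) + 1)) (Ioo 0 c) := fun n ↦
    (((continuous_pow n).div_const _).intervalIntegrable 0 c).1.mono_set Ioo_subset_Ioc_self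
  have hF0 : ∀ n : ℕ, 0 ≤ᵐ[volume.restrict (Ioo 0 c)] fun x : ℝ ↦ x ^ n / ((n : ℝ) + 1) :=
    fun n ↦ ae_restrict_of_forall_mem measurableSet_Ioo fun x hx ↦ by
      have := hx.1
      positivity
  have hg : ∀ᵐ x ∂volume.restrict (Ioo 0 c),
      HasSum (fun n : ℕ ↦ x ^ n / ((n : ℝ) + 1)) (-log (1 - x) / x) :=
    ae_restrict_of_forall_mem measurableSet_Ioo fun x hx ↦
      hasSum_pow_div_succ_of_abs_lt_one hx.1.ne'
        (abs_lt.2 ⟨by linarith [hx.1], hx.2.trans_le hc1⟩)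
  have hint : ∀ n : ℕ,
      ∫ x in Ioo 0 c, x ^ n / ((n : ℝ) + 1) = c ^ (n + 1) / ((n : ℝ) + 1) ^ 2 := by
    intro n
    rw [← integral_Ioc_eq_integral_Ioo, ← intervalIntegral.integral_of_le hc0,
      intervalIntegral.integral_div, integral_pow]
    field_simp
    ring
  have hsum : Summable fun n : ℕ ↦ ∫ x in Ioo 0 c, x ^ n / ((n : ℝ) + 1) := by
    simpa only [hint] using (hasSum_dilog (abs_le.2 ⟨by linarith, hc1⟩)).summable
  have hgi := integrable_of_hasSum_of_nonneg hF hF0 hg hsum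
  refine ⟨(intervalIntegrable_iff_integrableOn_Ioo_of_le hc0).2 hgi, ?_⟩
  rw [intervalIntegral.integral_of_le hc0, integral_Ioc_eq_integral_Ioo]
  refine (hasSum_integral_of_nonneg (fun n ↦ (hF n).1) hF0 hg hgi).unique ?_
  simpa only [hint] using hasSum_dilog (abs_le.2 ⟨by linarith, hc1⟩)

theorem integral_neg_log_div_one_sub {c : ℝ} (hc0 : 0 ≤ c) (hc1 : c < 1) :
    ∫ x in (0 : ℝ)..c, -log x / (1 - x) = dilog c + log c * log (1 - c) := by
  have h := hasSum_integral_neg_log_div_one_sub_mul zero_le_one hc0 hc1.le (by linarith)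
  simp only [one_pow, one_mul] at h
  have hc : |c| < 1 := abs_lt.2 ⟨by linarith, hc1⟩
  have hser : HasSum
      (fun n : ℕ ↦ c ^ (n + 1) / ((n : ℝ) + 1) ^ 2 - c ^ (n + 1) * log c / ((n : ℝ) + 1))
      (dilog c - log c * -log (1 - c)) :=
    ((hasSum_dilog hc.le).sub ((hasSum_pow_div_log_of_abs_lt_one hc).mul_left (log c))).congr_fun
      fun n ↦ by ring
  rw [h.unique hser]
  ring

theorem dilog_add_dilog_one_sub {c : ℝ} (hc0 : 0 < c) (hc1 : c < 1) :
    dilog c + dilog (1 - c) = π ^ 2 / 6 - log c * log (1 - c) := by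
  obtain ⟨hint, hdilog⟩ :=
    intervalIntegrable_neg_log_one_sub_div_and_integral_eq_dilog zero_le_one le_rfl
  have hmem : c ∈ uIcc (0 : ℝ) 1 := by rw [uIcc_of_le zero_le_one]; exact ⟨hc0.le, hc1.le⟩
  have hsplit := intervalIntegral.integral_add_adjacent_intervals
    (hint.mono_set (uIcc_subset_uIcc left_mem_uIcc hmem))
    (hint.mono_set (uIcc_subset_uIcc hmem right_mem_uIcc))
  have hreflect : ∫ x in c..1, -log (1 - x) / x = ∫ x in (0 : ℝ)..1 - c, -log x / (1 - x) := by
    simpa using intervalIntegral.integral_comp_sub_left (fun x ↦ -log x / (1 - x))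
      (a := c) (b := 1) 1
  rw [hdilog, dilog_one,
    (intervalIntegrable_neg_log_one_sub_div_and_integral_eq_dilog hc0.le hc1.le).2, hreflect,
    integral_neg_log_div_one_sub (by linarith) (by linarith), sub_sub_cancel] at hsplit
  linarith

theorem dilog_one_half : dilog (1 / 2) = π ^ 2 / 12 - log 2 ^ 2 / 2 := by
  have h := dilog_add_dilog_one_sub (c := 1 / 2) (by norm_num) (by norm_num)
  rw [show (1 : ℝ) - 1 / 2 = 1 / 2 by norm_num, one_div, log_inv] at h
  rw [one_div]
  linarith

theorem integral_log_div_sub_two : ∫ x in (0 : ℝ)..1, log x / (x - 2) = dilog (1 / 2) := by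
  have h := (hasSum_integral_neg_log_div_one_sub_mul (a := 1 / 2) (by norm_num) zero_le_one
    le_rfl (by norm_num)).mul_left (1 / 2)
  rw [← intervalIntegral.integral_const_mul] at h
  have hcongr : ∫ x in (0 : ℝ)..1, log x / (x - 2)
      = ∫ x in (0 : ℝ)..1, 1 / 2 * (-log x / (1 - 1 / 2 * x)) := by
    refine intervalIntegral.integral_congr fun x hx ↦ ?_
    rw [uIcc_of_le zero_le_one] at hx
    have : x - 2 ≠ 0 := by linarith [hx.2]
    have : 2 - x ≠ 0 := by linarith [hx.2]
    field_simp
    ring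
  rw [hcongr]
  refine h.unique ((hasSum_dilog (x := 1 / 2) (by norm_num [abs_of_pos])).congr_fun fun n ↦ ?_)
  simp only [one_pow, log_one]
  ring

theorem stmt_9 :
    ∫ x in (0:ℝ)..1, Real.log x / (x - 2) = π ^ 2 / 12 - (Real.log 2) ^ 2 / 2 := by
  rw [integral_log_div_sub_two, dilog_one_half]
end
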